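/- arXiv:2006.08788 — 3 statements merged into one kernel-verified Lean document; each statement's English description precedes it below -/
import Mathlib

section
/- Let t : 𝒳 → 𝒵 be an injective measurable map, and let μ be a purely atomic probability law of X supported on a countably infinite set of atoms, each of positive mass. Then I_{χ²}(X, t(X)) = ∞. -/
open MeasureTheory ProbabilityTheory ENNReal

section Defs

variable {X Z : Type*} [MeasurableSpace X] [MeasurableSpace Z]

/-- Class-conditional law of the representation `t(X)` given `S = s`, for a joint
distribution `μ` of `(X, S)` on `𝒳 × {0,1}`. -/
noncomputable def condLaw (μ : Measure (X × Bool)) (t : X → Z) (s : Bool) : Measure Z :=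
  (μ[|{p | p.2 = s}]).map fun p => t p.1

/-- Demographic disparity `Δ(f) = |μ¹(A) - μ⁰(A)|` of the test `f = 𝟙_A`. -/
noncomputable def disparity (μ0 μ1 : Measure Z) (A : Set Z) : ℝ :=
  |(μ1 A).toReal - (μ0 A).toReal|

/-- `Δ*`: supremum of the demographic disparity over all measurable binary tests. -/
noncomputable def deltaStar (μ0 μ1 : Measure Z) : ℝ :=
  ⨆ (A : Set Z) (_ : MeasurableSet A), disparity μ0 μ1 A

/-- χ²-mutual information `I_{χ²}(X, t(X)) = ∫ 1/ν({t x}) dμ(x) - 1` of a deterministic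
representation `t`, where `ν = t_* μ` (with the convention `1/0 = ∞`). -/
noncomputable def chiSqMIdet (μX : Measure X) (t : X → Z) : ℝ≥0∞ :=
  (∫⁻ x, ((μX.map t) {t x})⁻¹ ∂μX) - 1

end Defs

/-- For an injective measurable map `t` and a purely atomic law `μ`
of `X` supported on countably infinitely many atoms of positive mass,
`I_{χ²}(X, t(X)) = ∞`. -/
theorem statement5 {X Z : Type*} [MeasurableSpace X] [MeasurableSingletonClass X]
    [MeasurableSpace Z] [MeasurableSingletonClass Z]
    (t : X → Z) (ht : Measurable t) (htinj : Function.Injective t)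
    (μ : Measure X) [IsProbabilityMeasure μ]
    (a : ℕ → X) (ha : Function.Injective a)
    (hpos : ∀ k : ℕ, 0 < μ {a k}) (hsupp : μ (Set.range a) = 1) :
    chiSqMIdet μ t = ⊤ := by
  have hmap : ∀ x, (μ.map t) {t x} = μ {x} := by
    intro x
    rw [Measure.map_apply ht (measurableSet_singleton _)]
    congr 1
    ext y
    simp [htinj.eq_iff]
  have hint : (∫⁻ x, ((μ.map t) {t x})⁻¹ ∂μ) = ⊤ := by
    refine top_unique ?_
    calc (⊤ : ℝ≥0∞) = ∑' k : ℕ, 1 := by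
          simp [ENNReal.tsum_const_eq_top_of_ne_zero one_ne_zero]
      _ = ∑' k : (Set.range a), (μ {(k : X)})⁻¹ * μ {(k : X)} := by
          rw [← (Equiv.ofInjective a ha).tsum_eq]
          congr 1
          ext k
          have h0 : μ {a k} ≠ 0 := (hpos k).ne'
          have hT : μ {a k} ≠ ⊤ := (measure_lt_top μ _).ne
          simp [Equiv.ofInjective, ENNReal.inv_mul_cancel h0 hT]
      _ = ∫⁻ x in Set.range a, (μ {x})⁻¹ ∂μ := by
          rw [lintegral_countable _ (Set.countable_range a)]
      _ ≤ ∫⁻ x, (μ {x})⁻¹ ∂μ := lintegral_mono' Measure.restrict_le_self le_rfl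
      _ = ∫⁻ x, ((μ.map t) {t x})⁻¹ ∂μ := by simp_rw [hmap]
  simp [chiSqMIdet, hint]
end

section
/- Let μ be a probability measure on 𝒳, ν a σ-finite measure on 𝒵, and φ(·,x) a measurable family of probability densities with respect to ν, with mixture density q(z) = ∫ φ(z,x) dμ(x), and suppose I_{χ²}(X,Z) < ∞. Let X_1, …, X_n be i.i.d. with law μ and let q_n(z) = (1/n) Σ_{i=1}^n φ(z, X_i). Then E[ ∫ |q(z) − q_n(z)| dν(z) ] ≤ √(I_{χ²}(X,Z)/n). -/
open MeasureTheory ProbabilityTheory ENNReal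

section Defs

variable {X Z : Type*} [MeasurableSpace X] [MeasurableSpace Z]

/-- Mixture density `q(z) = ∫ φ(z,x) dμ(x)` of the representation `Z`, where `φ(·,x)`
is the conditional density of `Z` given `X = x` with respect to a reference measure. -/
noncomputable def mixDensity (μ : Measure X) (φ : Z → X → ℝ) (z : Z) : ℝ :=
  ∫ x, φ z x ∂μ

/-- χ²-mutual information
`I_{χ²}(X,Z) = ∫∫ (φ(z,x)/q(z) − 1)² q(z) dν(z) dμ(x)` of a representation given by a
conditional density `φ` with respect to `ν`. -/
noncomputable def chiSqMIKernel (μ : Measure X) (ν : Measure Z) (φ : Z → X → ℝ) : ℝ≥0∞ :=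
  ∫⁻ x, ∫⁻ z, ENNReal.ofReal ((φ z x / mixDensity μ φ z - 1) ^ 2 * mixDensity μ φ z) ∂ν ∂μ

/-- Conditional law of `X` given `S = s`, for a joint law `μ` of `(X,S)`. -/
noncomputable def condX (μ : Measure (X × Bool)) (s : Bool) : Measure X :=
  (μ[|{p | p.2 = s}]).map Prod.fst

/-- Class-conditional law of the representation `Z`: the measure on `𝒵` with density
`z ↦ ∫ φ(z,x) dμ(x)` with respect to `ν`. -/
noncomputable def classLaw (ν : Measure Z) (μ : Measure X) (φ : Z → X → ℝ) : Measure Z :=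
  ν.withDensity fun z => ENNReal.ofReal (mixDensity μ φ z)

/-- Empirical mixture density `μ_n(z) = (1/m) Σ_i φ(z, x_i)` built from a sample `D`. -/
noncomputable def empDensity (φ : Z → X → ℝ) {m : ℕ} (D : Fin m → X) (z : Z) : ℝ :=
  (m : ℝ)⁻¹ * ∑ i, φ z (D i)

end Defs

/-! For fixed `z`, `q_n(z)` is the mean of `n` i.i.d. copies of `φ(z, X)`, so by Cauchy–Schwarz
and additivity of variance `E|q(z) - q_n(z)| ≤ √(Var φ(z, X) / n)`. Integrating in `z` and
applying Cauchy–Schwarz once more with weight `q`,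
`∫ √V dν ≤ (∫ V / q dν)^{1/2} (∫ q dν)^{1/2}`, where `∫ q dν = 1` and
`∫ Var φ(z, X) / q(z) dν(z) = I_{χ²}(X, Z)`. -/

section

variable {α : Type*} [MeasurableSpace α] {μ : Measure α}

lemma lintegral_rpow_half_le_lintegral_div_mul_lintegral {V Q : α → ℝ≥0∞}
    (hV : AEMeasurable V μ) (hQ : AEMeasurable Q μ) (hQ_top : ∀ᵐ a ∂μ, Q a ≠ ∞)
    (hVQ : ∀ᵐ a ∂μ, Q a = 0 → V a = 0) :
    ∫⁻ a, V a ^ (1 / 2 : ℝ) ∂μ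
      ≤ (∫⁻ a, V a / Q a ∂μ) ^ (1 / 2 : ℝ) * (∫⁻ a, Q a ∂μ) ^ (1 / 2 : ℝ) := by
  have hsplit : ∀ᵐ a ∂μ, V a ^ (1 / 2 : ℝ) = (V a / Q a) ^ (1 / 2 : ℝ) * Q a ^ (1 / 2 : ℝ) := by
    filter_upwards [hQ_top, hVQ] with a htop hzero
    rw [← ENNReal.mul_rpow_of_nonneg _ _ (by norm_num)]
    rcases eq_or_ne (Q a) 0 with h0 | h0
    · simp [h0, hzero h0]
    · rw [ENNReal.div_mul_cancel h0 htop]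
  have hsq (x : ℝ≥0∞) : (x ^ (1 / 2 : ℝ)) ^ (2 : ℝ) = x := by
    rw [← ENNReal.rpow_mul]; norm_num
  calc ∫⁻ a, V a ^ (1 / 2 : ℝ) ∂μ
      = ∫⁻ a, (V a / Q a) ^ (1 / 2 : ℝ) * Q a ^ (1 / 2 : ℝ) ∂μ := lintegral_congr_ae hsplit
    _ ≤ (∫⁻ a, ((V a / Q a) ^ (1 / 2 : ℝ)) ^ (2 : ℝ) ∂μ) ^ (1 / 2 : ℝ)
          * (∫⁻ a, (Q a ^ (1 / 2 : ℝ)) ^ (2 : ℝ) ∂μ) ^ (1 / 2 : ℝ) :=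
        ENNReal.lintegral_mul_le_Lp_mul_Lq μ Real.HolderConjugate.two_two
          ((hV.div hQ).pow_const _) (hQ.pow_const _)
    _ = _ := by simp only [hsq]

lemma integral_integral_abs_le_of_lintegral_lintegral_le {β : Type*} [MeasurableSpace β]
    {ν : Measure β} {F : α → β → ℝ} {c : ℝ} (hc : 0 ≤ c)
    (h : ∫⁻ a, ∫⁻ b, ‖F a b‖ₑ ∂ν ∂μ ≤ ENNReal.ofReal c) :
    ∫ a, ∫ b, |F a b| ∂ν ∂μ ≤ c := by
  have hnonneg : 0 ≤ ∫ a, ∫ b, |F a b| ∂ν ∂μ :=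
    integral_nonneg fun a => integral_nonneg fun b => abs_nonneg _
  rw [← ENNReal.ofReal_le_ofReal_iff hc, ← Real.enorm_of_nonneg hnonneg]
  calc ‖∫ a, ∫ b, |F a b| ∂ν ∂μ‖ₑ
      ≤ ∫⁻ a, ‖∫ b, |F a b| ∂ν‖ₑ ∂μ := enorm_integral_le_lintegral_enorm _
    _ ≤ ∫⁻ a, ∫⁻ b, ‖F a b‖ₑ ∂ν ∂μ := lintegral_mono fun a => by
        simpa only [Real.enorm_abs] using enorm_integral_le_lintegral_enorm fun b => |F a b|
    _ ≤ ENNReal.ofReal c := h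

end

namespace ProbabilityTheory

variable {Ω : Type*} [MeasurableSpace Ω] {μ : Measure Ω} {f : Ω → ℝ}

lemma lintegral_enorm_sub_integral_le_sqrt_evariance [IsProbabilityMeasure μ] {g : Ω → ℝ}
    (hg : AEMeasurable g μ) :
    ∫⁻ ω, ‖g ω - μ[g]‖ₑ ∂μ ≤ evariance g μ ^ (1 / 2 : ℝ) := by
  have := ENNReal.lintegral_mul_le_Lp_mul_Lq μ Real.HolderConjugate.two_two
    (hg.sub_const μ[g]).enorm aemeasurable_const (g := 1)
  simpa [evariance, ENNReal.rpow_two] using this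

lemma evariance_eq_zero_of_integral_eq_zero (hf0 : 0 ≤ᵐ[μ] f) (hf : Integrable f μ)
    (h : μ[f] = 0) : evariance f μ = 0 := by
  have hf_zero : f =ᵐ[μ] 0 := (integral_eq_zero_iff_of_nonneg_ae hf0 hf).1 h
  rw [evariance_congr hf_zero]
  simp

lemma lintegral_ofReal_sq_div_integral_sub_one_mul_integral (hf0 : 0 ≤ᵐ[μ] f)
    (hf : Integrable f μ) :
    ∫⁻ x, ENNReal.ofReal ((f x / μ[f] - 1) ^ 2 * μ[f]) ∂μ
      = evariance f μ / ENNReal.ofReal μ[f] := by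
  rcases (integral_nonneg_of_ae hf0).eq_or_lt with hm | hm
  -- `f = 0` a.e., so both sides vanish, the right one because `0 / 0 = 0` in `ℝ≥0∞`
  · simp [← hm, evariance_eq_zero_of_integral_eq_zero hf0 hf hm.symm]
  · have hpt (x : Ω) : (f x / μ[f] - 1) ^ 2 * μ[f] = (f x - μ[f]) ^ 2 / μ[f] := by
      field_simp
    simp_rw [hpt, ENNReal.ofReal_div_of_pos hm, div_eq_mul_inv]
    rw [lintegral_mul_const' _ _ (ENNReal.inv_ne_top.2 (ENNReal.ofReal_pos.2 hm).ne'),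
      evariance_eq_lintegral_ofReal]

variable [IsProbabilityMeasure μ] {n : ℕ}

lemma integral_sampleMean_pi (hn : n ≠ 0) (hf : Integrable f μ) :
    ∫ D, (n : ℝ)⁻¹ * ∑ i, f (D i) ∂(Measure.pi fun _ : Fin n => μ) = μ[f] := by
  have hsum := integral_finsetSum (μ := Measure.pi fun _ : Fin n => μ) Finset.univ
    (f := fun i D => f (D i)) fun i _ =>
      (measurePreserving_eval _ i).integrable_comp_of_integrable hf
  have heval (i : Fin n) : ∫ D, f (D i) ∂(Measure.pi fun _ : Fin n => μ) = μ[f] :=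
    integral_comp_eval hf.aestronglyMeasurable
  simp [integral_const_mul, hsum, heval, hn]

lemma memLp_sum_comp_eval_pi {p : ℝ≥0∞} (hf : MemLp f p μ) :
    MemLp (fun D => ∑ i, f (D i)) p (Measure.pi fun _ : Fin n => μ) :=
  memLp_finsetSum _ fun i _ => hf.comp_measurePreserving (measurePreserving_eval _ i)

lemma evariance_sampleMean_pi (hn : n ≠ 0) (hf : MemLp f 2 μ) :
    evariance (fun D => (n : ℝ)⁻¹ * ∑ i, f (D i)) (Measure.pi fun _ : Fin n => μ)
      = evariance f μ / n := by
  have hsum : Var[fun D => ∑ i, f (D i); Measure.pi fun _ : Fin n => μ] = n * Var[f; μ] := by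
    have := variance_sum_pi (μ := fun _ : Fin n => μ) fun _ => hf
    rw [Finset.sum_fn] at this
    simpa using this
  rw [evariance_mul, ← ofReal_variance hf, ← ofReal_variance (memLp_sum_comp_eval_pi hf), hsum,
    ← ENNReal.ofReal_mul (by positivity), ← ENNReal.ofReal_natCast,
    ← ENNReal.ofReal_div_of_pos (by positivity)]
  congr 1
  field_simp

lemma lintegral_enorm_integral_sub_sampleMean_le (hn : n ≠ 0)
    (hf : AEStronglyMeasurable f μ) :
    ∫⁻ D, ‖μ[f] - (n : ℝ)⁻¹ * ∑ i, f (D i)‖ₑ ∂(Measure.pi fun _ : Fin n => μ)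
      ≤ (evariance f μ / n) ^ (1 / 2 : ℝ) := by
  by_cases hf2 : MemLp f 2 μ
  · rw [← evariance_sampleMean_pi hn hf2, ← integral_sampleMean_pi hn (hf2.integrable one_le_two)]
    simp_rw [enorm_sub_rev]
    exact lintegral_enorm_sub_integral_le_sqrt_evariance
      ((memLp_sum_comp_eval_pi hf2).const_mul _).aestronglyMeasurable.aemeasurable
  · simp [evariance_eq_top hf hf2, ENNReal.top_div_of_ne_top (ENNReal.natCast_ne_top n)]

end ProbabilityTheory

section MixtureDensity

variable {X Z : Type*} [MeasurableSpace X] [MeasurableSpace Z] {μ : Measure X}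
  {ν : Measure Z} {φ : Z → X → ℝ}

lemma measurable_mixDensity [SFinite μ] (hφm : Measurable (Function.uncurry φ)) :
    Measurable (mixDensity μ φ) :=
  hφm.stronglyMeasurable.integral_prod_right.measurable

lemma measurable_evariance_section [SFinite μ] (hφm : Measurable (Function.uncurry φ)) :
    Measurable fun z => evariance (φ z) μ := by
  simp_rw [evariance_eq_lintegral_ofReal]
  exact Measurable.lintegral_prod_right'
    (((hφm.sub ((measurable_mixDensity hφm).comp measurable_fst)).pow_const 2).ennreal_ofReal)

lemma lintegral_lintegral_ofReal_eq_one [SFinite ν] [IsProbabilityMeasure μ]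
    (hφm : Measurable (Function.uncurry φ))
    (hφ0 : ∀ z x, 0 ≤ φ z x) (hφ1 : ∀ x, ∫ z, φ z x ∂ν = 1) :
    ∫⁻ z, ∫⁻ x, ENNReal.ofReal (φ z x) ∂μ ∂ν = 1 := by
  have hsection (x : X) : ∫⁻ z, ENNReal.ofReal (φ z x) ∂ν = 1 := by
    have hint : Integrable (fun z => φ z x) ν :=
      Integrable.of_integral_ne_zero (by simp [hφ1 x])
    rw [← ofReal_integral_eq_lintegral_ofReal hint (.of_forall fun z => hφ0 z x), hφ1 x,
      ENNReal.ofReal_one]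
  rw [lintegral_lintegral_swap hφm.ennreal_ofReal.aemeasurable]
  simp [hsection]

lemma ae_integrable_section [SFinite ν] [IsProbabilityMeasure μ]
    (hφm : Measurable (Function.uncurry φ)) (hφ0 : ∀ z x, 0 ≤ φ z x)
    (hφ1 : ∀ x, ∫ z, φ z x ∂ν = 1) :
    ∀ᵐ z ∂ν, Integrable (φ z) μ := by
  have hfin : ∀ᵐ z ∂ν, ∫⁻ x, ENNReal.ofReal (φ z x) ∂μ < ∞ :=
    ae_lt_top' (Measurable.lintegral_prod_right' hφm.ennreal_ofReal).aemeasurable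
      (by rw [lintegral_lintegral_ofReal_eq_one (μ := μ) hφm hφ0 hφ1]; exact ENNReal.one_ne_top)
  filter_upwards [hfin] with z hz
  refine ⟨(hφm.comp measurable_prodMk_left).aestronglyMeasurable, ?_⟩
  simpa [hasFiniteIntegral_iff_ofReal (.of_forall (hφ0 z))] using hz

lemma lintegral_ofReal_mixDensity [SFinite ν] [IsProbabilityMeasure μ]
    (hφm : Measurable (Function.uncurry φ)) (hφ0 : ∀ z x, 0 ≤ φ z x)
    (hφ1 : ∀ x, ∫ z, φ z x ∂ν = 1) :
    ∫⁻ z, ENNReal.ofReal (mixDensity μ φ z) ∂ν = 1 := by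
  rw [← lintegral_lintegral_ofReal_eq_one (μ := μ) hφm hφ0 hφ1]
  refine lintegral_congr_ae ?_
  filter_upwards [ae_integrable_section (μ := μ) hφm hφ0 hφ1] with z hz
  exact ofReal_integral_eq_lintegral_ofReal hz (.of_forall (hφ0 z))

lemma chiSqMIKernel_eq_lintegral_evariance_div [SFinite ν] [IsProbabilityMeasure μ]
    (hφm : Measurable (Function.uncurry φ)) (hφ0 : ∀ z x, 0 ≤ φ z x)
    (hφ1 : ∀ x, ∫ z, φ z x ∂ν = 1) :
    chiSqMIKernel μ ν φ = ∫⁻ z, evariance (φ z) μ / ENNReal.ofReal (mixDensity μ φ z) ∂ν := by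
  have hq : Measurable fun p : X × Z => mixDensity μ φ p.2 :=
    (measurable_mixDensity hφm).comp measurable_snd
  have hφm' : Measurable fun p : X × Z => φ p.2 p.1 := hφm.comp measurable_swap
  rw [chiSqMIKernel, lintegral_lintegral_swap
    ((((hφm'.div hq).sub measurable_const).pow_const 2).mul hq).ennreal_ofReal.aemeasurable]
  refine lintegral_congr_ae ?_
  filter_upwards [ae_integrable_section (μ := μ) hφm hφ0 hφ1] with z hz
  exact lintegral_ofReal_sq_div_integral_sub_one_mul_integral (.of_forall (hφ0 z)) hz

lemma measurable_empDensity_uncurry (hφm : Measurable (Function.uncurry φ)) (n : ℕ) :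
    Measurable fun p : (Fin n → X) × Z => empDensity φ p.1 p.2 :=
  (Finset.measurable_sum _ fun i _ =>
    hφm.comp (measurable_snd.prodMk ((measurable_pi_apply i).comp measurable_fst))).const_mul _

lemma lintegral_lintegral_enorm_mixDensity_sub_empDensity_le [SFinite ν]
    [IsProbabilityMeasure μ] (hφm : Measurable (Function.uncurry φ))
    (hφ0 : ∀ z x, 0 ≤ φ z x) (hφ1 : ∀ x, ∫ z, φ z x ∂ν = 1) {n : ℕ} (hn : n ≠ 0) :
    ∫⁻ D, ∫⁻ z, ‖mixDensity μ φ z - empDensity φ D z‖ₑ ∂ν ∂(Measure.pi fun _ : Fin n => μ)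
      ≤ (chiSqMIKernel μ ν φ / n) ^ (1 / 2 : ℝ) := by
  have hq := measurable_mixDensity (μ := μ) hφm
  have hjoint : Measurable fun p : (Fin n → X) × Z =>
      ‖mixDensity μ φ p.2 - empDensity φ p.1 p.2‖ₑ :=
    ((hq.comp measurable_snd).sub (measurable_empDensity_uncurry hφm n)).enorm
  have hzero : ∀ᵐ z ∂ν, ENNReal.ofReal (mixDensity μ φ z) = 0 → evariance (φ z) μ / n = 0 := by
    filter_upwards [ae_integrable_section (μ := μ) hφm hφ0 hφ1] with z hz hq0
    have hq0' : mixDensity μ φ z = 0 :=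
      le_antisymm (ENNReal.ofReal_eq_zero.1 hq0) (integral_nonneg (hφ0 z))
    rw [evariance_eq_zero_of_integral_eq_zero (.of_forall (hφ0 z)) hz hq0', ENNReal.zero_div]
  calc ∫⁻ D, ∫⁻ z, ‖mixDensity μ φ z - empDensity φ D z‖ₑ ∂ν ∂(Measure.pi fun _ : Fin n => μ)
      = ∫⁻ z, ∫⁻ D, ‖mixDensity μ φ z - empDensity φ D z‖ₑ
          ∂(Measure.pi fun _ : Fin n => μ) ∂ν :=
        lintegral_lintegral_swap hjoint.aemeasurable
    _ ≤ ∫⁻ z, (evariance (φ z) μ / n) ^ (1 / 2 : ℝ) ∂ν := lintegral_mono fun z =>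
        lintegral_enorm_integral_sub_sampleMean_le hn
          (hφm.comp measurable_prodMk_left).aestronglyMeasurable
    _ ≤ (∫⁻ z, evariance (φ z) μ / n / ENNReal.ofReal (mixDensity μ φ z) ∂ν) ^ (1 / 2 : ℝ)
          * (∫⁻ z, ENNReal.ofReal (mixDensity μ φ z) ∂ν) ^ (1 / 2 : ℝ) :=
        lintegral_rpow_half_le_lintegral_div_mul_lintegral
          ((measurable_evariance_section hφm).div_const _).aemeasurable
          hq.ennreal_ofReal.aemeasurable (.of_forall fun _ => ENNReal.ofReal_ne_top) hzero
    _ = (chiSqMIKernel μ ν φ / n) ^ (1 / 2 : ℝ) := by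
        rw [lintegral_ofReal_mixDensity hφm hφ0 hφ1, ENNReal.one_rpow, mul_one,
          chiSqMIKernel_eq_lintegral_evariance_div hφm hφ0 hφ1]
        simp_rw [ENNReal.div_right_comm (b := (n : ℝ≥0∞)), div_eq_mul_inv _ (n : ℝ≥0∞)]
        rw [lintegral_mul_const' _ _ (ENNReal.inv_ne_top.2 (Nat.cast_ne_zero.2 hn))]

end MixtureDensity

/-- For a conditional density family `φ` w.r.t. a σ-finite `ν` with
mixture `q`, finite χ²-mutual information, and `q_n` the empirical mixture of an
i.i.d. sample `X_1, …, X_n ∼ μ`: `E[∫ |q − q_n| dν] ≤ √(I_{χ²}(X,Z)/n)`. -/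
theorem statement13 {X Z : Type*} [MeasurableSpace X] [MeasurableSpace Z]
    (μ : Measure X) [IsProbabilityMeasure μ] (ν : Measure Z) [SigmaFinite ν]
    (φ : Z → X → ℝ) (hφm : Measurable (Function.uncurry φ))
    (hφ0 : ∀ z x, 0 ≤ φ z x) (hφ1 : ∀ x, ∫ z, φ z x ∂ν = 1)
    (hI : chiSqMIKernel μ ν φ ≠ ⊤)
    (n : ℕ) (hn : 1 ≤ n) :
    (∫ D : Fin n → X, (∫ z, |mixDensity μ φ z - empDensity φ D z| ∂ν)
        ∂(Measure.pi fun _ : Fin n => μ)) ≤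
      Real.sqrt ((chiSqMIKernel μ ν φ).toReal / n) := by
  refine integral_integral_abs_le_of_lintegral_lintegral_le (Real.sqrt_nonneg _) ?_
  calc ∫⁻ D, ∫⁻ z, ‖mixDensity μ φ z - empDensity φ D z‖ₑ ∂ν ∂(Measure.pi fun _ : Fin n => μ)
      ≤ (chiSqMIKernel μ ν φ / n) ^ (1 / 2 : ℝ) :=
        lintegral_lintegral_enorm_mixDensity_sub_empDensity_le hφm hφ0 hφ1 (by omega)
    _ = ENNReal.ofReal (Real.sqrt ((chiSqMIKernel μ ν φ).toReal / n)) := by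
        rw [← ENNReal.ofReal_toReal hI, ← ENNReal.ofReal_natCast,
          ← ENNReal.ofReal_div_of_pos (by positivity),
          ENNReal.ofReal_rpow_of_nonneg (by positivity) (by norm_num), Real.sqrt_eq_rpow,
          ENNReal.toReal_ofReal ENNReal.toReal_nonneg]
end

section
/- Let K ≥ 2 and n ≥ 1. Let B_1, …, B_K be i.i.d. Bernoulli(1/2) random variables, and let X, X_1, …, X_n be i.i.d. uniform on {1, …, K}, independent of (B_1, …, B_K). Set S = B_X and S_i = B_{X_i} for i = 1, …, n. Then for every function f_n : {1, …, K} × ({1, …, K} × {0,1})^n → {0,1}, the misclassification probability satisfies P( f_n(X, (X_1,S_1), …, (X_n,S_n)) ≠ S ) ≥ (1/2)(1 − 1/K)^n. -/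
open MeasureTheory ENNReal

/-! On the event that the fresh point `X` is none of the sample points `X_i`, an event of
probability `(1 - 1/K)^n`, flipping the label `B_X` leaves everything the predictor sees unchanged
but flips the target `S = B_X`. This involution swaps correct and wrong predictions on that event,
so exactly half of it is misclassified. -/

open Finset

namespace MeasureTheory.Measure

variable {α β ι : Type*} [MeasurableSpace α] [MeasurableSpace β] [MeasurableSingletonClass α]
  [MeasurableSingletonClass β]

lemma prod_smul_count [Countable α] [Countable β] (a b : ℝ≥0∞) :
    (a • count : Measure α).prod (b • count : Measure β) = (a * b) • count := by
  refine ext_of_singleton fun ⟨x, y⟩ => ?_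
  rw [← Set.singleton_prod_singleton, prod_prod]
  simp

lemma pi_smul_count [Finite α] [Fintype ι] {a : ℝ≥0∞} (ha : a ≠ ∞) :
    Measure.pi (fun _ : ι => (a • count : Measure α)) = (a ^ Fintype.card ι) • count := by
  have : IsFiniteMeasure (a • count : Measure α) := count.smul_finite ha
  refine ext_of_singleton fun f => ?_
  simp

end MeasureTheory.Measure

lemma Fintype.card_filter_forall_ne {α ι : Type*} [Fintype α] [DecidableEq α] [Fintype ι]
    [DecidableEq ι] (x : α) :
    #{xs : ι → α | ∀ i, xs i ≠ x} = (Fintype.card α - 1) ^ Fintype.card ι := by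
  have : ({xs : ι → α | ∀ i, xs i ≠ x} : Finset _) = Fintype.piFinset fun _ => univ.erase x := by
    ext; simp [Fintype.mem_piFinset]
  rw [this, Fintype.card_piFinset, prod_const, card_erase_of_mem (mem_univ x), card_univ,
    card_univ]

section Counting

variable {α ι : Type*} [DecidableEq α]

def flipLabel (ω : (α → Bool) × α × (ι → α)) : (α → Bool) × α × (ι → α) :=
  (Function.update ω.1 ω.2.1 (!ω.1 ω.2.1), ω.2)

lemma flipLabel_flipLabel (ω : (α → Bool) × α × (ι → α)) : flipLabel (flipLabel ω) = ω := by
  simp [flipLabel]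

variable [Fintype α] [Fintype ι] [DecidableEq ι]

/- A configuration `ω = (b, x, xs)` consists of the labels `b`, the fresh point `x` and the sample
points `xs`. -/
def misclassified (f : α × (ι → α × Bool) → Bool) : Finset ((α → Bool) × α × (ι → α)) :=
  {ω | f (ω.2.1, fun i => (ω.2.2 i, ω.1 (ω.2.2 i))) ≠ ω.1 ω.2.1}

def unseen : Finset ((α → Bool) × α × (ι → α)) :=
  {ω | ∀ i, ω.2.2 i ≠ ω.2.1}

lemma flipLabel_mem_unseen_iff {ω : (α → Bool) × α × (ι → α)} :
    flipLabel ω ∈ unseen ↔ ω ∈ unseen := by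
  simp [flipLabel, unseen]

lemma flipLabel_mem_misclassified_iff (f : α × (ι → α × Bool) → Bool)
    {ω : (α → Bool) × α × (ι → α)} (hω : ω ∈ unseen) :
    flipLabel ω ∈ misclassified f ↔ ω ∉ misclassified f := by
  obtain ⟨b, x, xs⟩ := ω
  simp only [unseen, mem_filter, mem_univ, true_and] at hω
  simp [misclassified, flipLabel, Function.update_of_ne (hω _)]

lemma card_unseen_inter_misclassified (f : α × (ι → α × Bool) → Bool) :
    #(unseen ∩ misclassified f) = #(unseen \ misclassified f) := by
  refine card_nbij' flipLabel flipLabel ?_ ?_ (fun ω _ => flipLabel_flipLabel ω)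
    (fun ω _ => flipLabel_flipLabel ω)
  all_goals
    intro ω hω
    simp only [coe_inter, coe_sdiff, Set.mem_inter_iff, Set.mem_sdiff, mem_coe] at hω ⊢
    simp [flipLabel_mem_unseen_iff, flipLabel_mem_misclassified_iff f hω.1, hω]

lemma card_unseen :
    #(unseen : Finset ((α → Bool) × α × (ι → α))) =
      2 ^ Fintype.card α * (Fintype.card α * (Fintype.card α - 1) ^ Fintype.card ι) := by
  have : (unseen : Finset ((α → Bool) × α × (ι → α))) =
      univ ×ˢ ({p : α × (ι → α) | ∀ i, p.2 i ≠ p.1} : Finset _) := by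
    ext; simp [unseen]
  rw [this, card_product, card_univ, Fintype.card_fun, Fintype.card_bool, card_filter,
    Fintype.sum_prod_type]
  simp only [← card_filter, Fintype.card_filter_forall_ne, sum_const, card_univ, smul_eq_mul]

lemma card_unseen_le_two_mul_card_misclassified (f : α × (ι → α × Bool) → Bool) :
    #(unseen : Finset ((α → Bool) × α × (ι → α))) ≤ 2 * #(misclassified f) := by
  have := card_inter_add_card_sdiff unseen (misclassified f)
  have := card_unseen_inter_misclassified f
  have := card_le_card (inter_subset_right (s₁ := unseen) (s₂ := misclassified f))
  omega

end Counting

theorem statement18_general (K n : ℕ) (hK : 2 ≤ K)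
    (fn : Fin K × (Fin n → Fin K × Bool) → Bool) :
    (1 / 2 : ℝ) * (1 - 1 / (K : ℝ)) ^ n ≤
      (((Measure.pi fun _ : Fin K => ((2 : ℝ≥0∞)⁻¹ • Measure.count : Measure Bool)).prod
            (((K : ℝ≥0∞)⁻¹ • Measure.count : Measure (Fin K)).prod
              (Measure.pi fun _ : Fin n =>
                ((K : ℝ≥0∞)⁻¹ • Measure.count : Measure (Fin K)))))
          {ω : (Fin K → Bool) × Fin K × (Fin n → Fin K) |
            fn (ω.2.1, fun i => (ω.2.2 i, ω.1 (ω.2.2 i))) ≠ ω.1 ω.2.1}).toReal := by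
  have hK0 : K ≠ 0 := by omega
  rw [Measure.pi_smul_count (by simp), Measure.pi_smul_count (by simp [hK0]),
    Measure.prod_smul_count, Measure.prod_smul_count, Measure.smul_apply,
    show {ω | _} = (misclassified fn : Set _) by ext; simp [misclassified],
    Measure.count_apply_finset]
  have hcard : (2 : ℝ) ^ K * (K * (K - 1) ^ n) ≤ 2 * #(misclassified fn) := by
    have := card_unseen_le_two_mul_card_misclassified fn
    rw [card_unseen, Fintype.card_fin, Fintype.card_fin] at this
    rw [← Nat.cast_pred (by omega)]
    exact_mod_cast this
  simp only [Fintype.card_fin, smul_eq_mul, toReal_mul, toReal_pow, toReal_inv, toReal_ofNat,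
    toReal_natCast]
  rw [inv_pow, inv_pow, ← mul_inv, ← mul_inv, le_inv_mul_iff₀ (by positivity),
    one_sub_div (Nat.cast_ne_zero.2 hK0), div_pow]
  field_simp
  linarith

/-- Let `B_1, …, B_K` be i.i.d. Bernoulli(1/2) labels, and let
`X, X_1, …, X_n` be i.i.d. uniform on `{1, …, K}`, independent of the labels; set
`S = B_X` and `S_i = B_{X_i}`. Then every predictor
`f_n : {1..K} × ({1..K} × {0,1})^n → {0,1}` misclassifies the fresh point with
probability at least `(1/2)(1 − 1/K)^n`. -/
theorem statement18 (K n : ℕ) (hK : 2 ≤ K) (hn : 1 ≤ n)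
    (fn : Fin K × (Fin n → Fin K × Bool) → Bool) :
    (1 / 2 : ℝ) * (1 - 1 / (K : ℝ)) ^ n ≤
      (((Measure.pi fun _ : Fin K => ((2 : ℝ≥0∞)⁻¹ • Measure.count : Measure Bool)).prod
            (((K : ℝ≥0∞)⁻¹ • Measure.count : Measure (Fin K)).prod
              (Measure.pi fun _ : Fin n =>
                ((K : ℝ≥0∞)⁻¹ • Measure.count : Measure (Fin K)))))
          {ω : (Fin K → Bool) × Fin K × (Fin n → Fin K) |
            fn (ω.2.1, fun i => (ω.2.2 i, ω.1 (ω.2.2 i))) ≠ ω.1 ω.2.1}).toReal :=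
  statement18_general K n hK fn
end
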